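/- If u solves free NLS with exponent p and u_pc is its pseudoconformal transform, then u_pc solves (i∂_t + (1/2)Δ)u_pc = μ t^{(d/2)(p−1)−2} |u_pc|^{p−1} u_pc on (−I⁻¹) ∩ (0,∞) × ℝ^d. -/

import Mathlib

open MeasureTheory Real

noncomputable section

/-- The pseudoconformal transform. -/
def pseudoconformal (d : ℕ) (u : ℝ → EuclideanSpace ℝ (Fin d) → ℂ) :
    ℝ → EuclideanSpace ℝ (Fin d) → ℂ :=
  fun t x =>
    ((|t| ^ (-(d : ℝ) / 2) : ℝ) : ℂ) * u (-1 / t) (t⁻¹ • x) *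
      Complex.exp (Complex.I * ((‖x‖ : ℂ) ^ 2 / (2 * (t : ℂ))))

/-- Partial derivative in the `i`-th coordinate direction. -/
def pderiv (d : ℕ) (f : EuclideanSpace ℝ (Fin d) → ℂ) (i : Fin d)
    (x : EuclideanSpace ℝ (Fin d)) : ℂ :=
  fderiv ℝ f x (EuclideanSpace.single i 1)

/-- The Laplacian `Δf = ∑ᵢ ∂²f/∂xᵢ²`. -/
def laplacian (d : ℕ) (f : EuclideanSpace ℝ (Fin d) → ℂ)
    (x : EuclideanSpace ℝ (Fin d)) : ℂ :=
  ∑ i : Fin d, pderiv d (fun y => pderiv d f i y) i x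

namespace PCAux

variable {d : ℕ} {u : ℝ → EuclideanSpace ℝ (Fin d) → ℂ}

lemma euclid_sum_single (v : EuclideanSpace ℝ (Fin d)) :
    v = ∑ i : Fin d, v i • EuclideanSpace.single i (1:ℝ) := by
  ext j
  rw [WithLp.ofLp_sum, Finset.sum_apply]
  simp [EuclideanSpace.single_apply]

lemma clm_eval_basis (L : EuclideanSpace ℝ (Fin d) →L[ℝ] ℂ) (v : EuclideanSpace ℝ (Fin d)) :
    L v = ∑ i : Fin d, v i • L (EuclideanSpace.single i 1) := by
  conv_lhs => rw [euclid_sum_single v]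
  simp [_root_.map_sum, _root_.map_smul]

/-- phase factor -/
def Ph (t : ℝ) (x : EuclideanSpace ℝ (Fin d)) : ℂ :=
  Complex.exp (Complex.I * ((‖x‖ : ℂ) ^ 2 / (2 * (t : ℂ))))

def cc (d : ℕ) (t : ℝ) : ℂ := ((|t| ^ (-(d : ℝ) / 2) : ℝ) : ℂ)

lemma hasFDerivAt_phase (t : ℝ) (x : EuclideanSpace ℝ (Fin d)) :
    HasFDerivAt (fun x : EuclideanSpace ℝ (Fin d) => Ph t x)
      (Ph t x • (Complex.I / (2*(t:ℂ))) •
        (Complex.ofRealCLM.comp (2 • (innerSL ℝ) x))) x := by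
  have h0 : HasFDerivAt (fun x : EuclideanSpace ℝ (Fin d) => ‖x‖^2)
      (2 • (innerSL ℝ) x) x := (hasStrictFDerivAt_norm_sq x).hasFDerivAt
  have h1 : HasFDerivAt (fun x : EuclideanSpace ℝ (Fin d) => ((‖x‖^2 : ℝ) : ℂ))
      (Complex.ofRealCLM.comp (2 • (innerSL ℝ) x)) x :=
    Complex.ofRealCLM.hasFDerivAt.comp x h0
  have h2 := (h1.const_mul (Complex.I / (2*(t:ℂ)))).cexp
  have hsc : ∀ z : EuclideanSpace ℝ (Fin d),
      Complex.I / (2*(t:ℂ)) * ((‖z‖^2 : ℝ) : ℂ) = Complex.I * ((‖z‖ : ℂ) ^ 2 / (2 * (t : ℂ))) := by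
    intro z; push_cast; ring
  simp only [hsc] at h2
  exact h2

lemma phase_pderiv_eval (t : ℝ) (x : EuclideanSpace ℝ (Fin d)) (i : Fin d) :
    (Ph t x • (Complex.I / (2*(t:ℂ))) •
        (Complex.ofRealCLM.comp (2 • (innerSL ℝ) x))) (EuclideanSpace.single i 1)
    = Ph t x * (Complex.I * (x i) / (t:ℂ)) := by
  simp only [Ph]
  simp [ContinuousLinearMap.smul_apply, ContinuousLinearMap.comp_apply,
    EuclideanSpace.inner_single_right, smul_eq_mul]
  ring

variable (hs : ContDiff ℝ (⊤ : ℕ∞) fun q : ℝ × EuclideanSpace ℝ (Fin d) => u q.1 q.2)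
include hs

lemma us_contDiff (s : ℝ) : ContDiff ℝ (⊤ : ℕ∞) (u s) :=
  hs.comp (contDiff_const.prodMk contDiff_id)

lemma G_contDiff (s : ℝ) (i : Fin d) :
    ContDiff ℝ (⊤ : ℕ∞) (fun y => pderiv d (u s) i y) :=
  ((us_contDiff hs s).fderiv_right (by simp)).clm_apply contDiff_const

lemma hasFDerivAt_us (s : ℝ) (y : EuclideanSpace ℝ (Fin d)) :
    HasFDerivAt (u s) (fderiv ℝ (u s) y) y :=
  ((us_contDiff hs s).differentiable (by simp) y).hasFDerivAt

/-- first spatial derivative of the pseudoconformal transform -/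
lemma pderiv_pc (t : ℝ) (x : EuclideanSpace ℝ (Fin d)) (i : Fin d) :
    pderiv d (pseudoconformal d u t) i x
      = cc d t * ((t:ℂ)⁻¹ * pderiv d (u (-1/t)) i (t⁻¹ • x) * Ph t x)
        + cc d t * (u (-1/t) (t⁻¹ • x) * Ph t x * (Complex.I * (x i) / (t:ℂ))) := by
  have hB : HasFDerivAt (fun x : EuclideanSpace ℝ (Fin d) => u (-1/t) (t⁻¹ • x))
      ((fderiv ℝ (u (-1/t)) (t⁻¹ • x)).comp
        ((t⁻¹ : ℝ) • ContinuousLinearMap.id ℝ (EuclideanSpace ℝ (Fin d)))) x :=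
    (hasFDerivAt_us hs (-1/t) (t⁻¹ • x)).comp x ((hasFDerivAt_id x).const_smul t⁻¹)
  have hprod := (hB.const_mul (cc d t)).mul (hasFDerivAt_phase t x)
  have : pseudoconformal d u t
      = fun x : EuclideanSpace ℝ (Fin d) => cc d t * u (-1/t) (t⁻¹ • x) * Ph t x := rfl
  rw [pderiv, this, HasFDerivAt.fderiv (f := fun x : EuclideanSpace ℝ (Fin d) => cc d t * u (-1/t) (t⁻¹ • x) * Ph t x) hprod]
  simp only [pderiv]
  simp only [ContinuousLinearMap.add_apply, ContinuousLinearMap.smul_apply,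
    ContinuousLinearMap.comp_apply, ContinuousLinearMap.id_apply,
    innerSL_apply_apply, EuclideanSpace.inner_single_right,
    conj_trivial, Complex.ofRealCLM_apply, _root_.map_smul, smul_eq_mul,
    Complex.real_smul]
  push_cast
  ring

end PCAux

namespace PCAux2
open PCAux

variable {d : ℕ} {u : ℝ → EuclideanSpace ℝ (Fin d) → ℂ}
variable (hs : ContDiff ℝ (⊤ : ℕ∞) fun q : ℝ × EuclideanSpace ℝ (Fin d) => u q.1 q.2)
include hs

/-- second spatial derivative of the pseudoconformal transform -/
lemma pderiv_pderiv_pc (t : ℝ) (x : EuclideanSpace ℝ (Fin d)) (i : Fin d) :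
    pderiv d (fun y => pderiv d (pseudoconformal d u t) i y) i x
      = cc d t * Ph t x *
        ( (t:ℂ)⁻¹^2 * pderiv d (fun z => pderiv d (u (-1/t)) i z) i (t⁻¹ • x)
          + 2 * (Complex.I/(t:ℂ)^2) * (x i) * pderiv d (u (-1/t)) i (t⁻¹ • x)
          + u (-1/t) (t⁻¹ • x) * (Complex.I * (x i)/(t:ℂ))^2
          + u (-1/t) (t⁻¹ • x) * (Complex.I/(2*(t:ℂ)) * 2) ) := by
  have hfun : (fun y => pderiv d (pseudoconformal d u t) i y)
      = fun y => (cc d t * (t:ℂ)⁻¹) * (pderiv d (u (-1/t)) i (t⁻¹ • y) * Ph t y)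
        + (cc d t * Complex.I / (t:ℂ)) * ((u (-1/t) (t⁻¹ • y) * Ph t y) * ((y i : ℝ):ℂ)) := by
    funext y
    rw [pderiv_pc hs t y i]
    push_cast
    ring
  rw [hfun]
  have hG : HasFDerivAt (fun y : EuclideanSpace ℝ (Fin d) => pderiv d (u (-1/t)) i (t⁻¹ • y))
      ((fderiv ℝ (fun z => pderiv d (u (-1/t)) i z) (t⁻¹ • x)).comp
        ((t⁻¹ : ℝ) • ContinuousLinearMap.id ℝ (EuclideanSpace ℝ (Fin d)))) x :=
    (((G_contDiff hs (-1/t) i).differentiable (by simp) (t⁻¹ • x)).hasFDerivAt).comp x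
      ((hasFDerivAt_id x).const_smul t⁻¹)
  have hB : HasFDerivAt (fun y : EuclideanSpace ℝ (Fin d) => u (-1/t) (t⁻¹ • y))
      ((fderiv ℝ (u (-1/t)) (t⁻¹ • x)).comp
        ((t⁻¹ : ℝ) • ContinuousLinearMap.id ℝ (EuclideanSpace ℝ (Fin d)))) x :=
    (hasFDerivAt_us hs (-1/t) (t⁻¹ • x)).comp x ((hasFDerivAt_id x).const_smul t⁻¹)
  have hX : HasFDerivAt (fun y : EuclideanSpace ℝ (Fin d) => ((y i : ℝ):ℂ))
      (Complex.ofRealCLM.comp (EuclideanSpace.proj i)) x :=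
    (Complex.ofRealCLM.comp (EuclideanSpace.proj i)).hasFDerivAt
  have h := (((hG.mul (hasFDerivAt_phase t x)).const_mul (cc d t * (t:ℂ)⁻¹)).add
    (((hB.mul (hasFDerivAt_phase t x)).mul hX).const_mul (cc d t * Complex.I / (t:ℂ))))
  rw [pderiv, HasFDerivAt.fderiv (f := fun y : EuclideanSpace ℝ (Fin d) => (cc d t * (t:ℂ)⁻¹) * (pderiv d (u (-1/t)) i (t⁻¹ • y) * Ph t y)
          + (cc d t * Complex.I / (t:ℂ)) * ((u (-1/t) (t⁻¹ • y) * Ph t y) * ((y i : ℝ):ℂ))) h]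
  simp only [pderiv]
  simp only [ContinuousLinearMap.add_apply, ContinuousLinearMap.smul_apply,
    ContinuousLinearMap.comp_apply, ContinuousLinearMap.id_apply,
    innerSL_apply_apply, EuclideanSpace.inner_single_right,
    conj_trivial, Complex.ofRealCLM_apply, _root_.map_smul, smul_eq_mul,
    Complex.real_smul, PiLp.proj_apply, EuclideanSpace.single_apply, Pi.mul_apply]

  push_cast
  ring

end PCAux2

namespace PCAux3
open PCAux PCAux2

variable {d : ℕ} {u : ℝ → EuclideanSpace ℝ (Fin d) → ℂ}
variable (hs : ContDiff ℝ (⊤ : ℕ∞) fun q : ℝ × EuclideanSpace ℝ (Fin d) => u q.1 q.2)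
include hs

lemma laplacian_pc (t : ℝ) (x : EuclideanSpace ℝ (Fin d)) :
    laplacian d (pseudoconformal d u t) x
      = cc d t * Ph t x * ((t:ℂ)⁻¹^2) * laplacian d (u (-1/t)) (t⁻¹ • x)
        + cc d t * Ph t x * (2*Complex.I*(t:ℂ)⁻¹^2) *
            (∑ i : Fin d, ((x i : ℝ):ℂ) * pderiv d (u (-1/t)) i (t⁻¹ • x))
        + cc d t * Ph t x * (u (-1/t) (t⁻¹ • x) * (Complex.I*(t:ℂ)⁻¹)^2) * ((‖x‖^2 : ℝ):ℂ)
        + cc d t * Ph t x * (u (-1/t) (t⁻¹ • x) * Complex.I * (t:ℂ)⁻¹) * (d:ℂ) := by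
  have hsum : laplacian d (pseudoconformal d u t) x
      = ∑ i : Fin d,
        ( cc d t * Ph t x * ((t:ℂ)⁻¹^2) * pderiv d (fun z => pderiv d (u (-1/t)) i z) i (t⁻¹ • x)
          + cc d t * Ph t x * (2*Complex.I*(t:ℂ)⁻¹^2) * (((x i : ℝ):ℂ) * pderiv d (u (-1/t)) i (t⁻¹ • x))
          + cc d t * Ph t x * (u (-1/t) (t⁻¹ • x) * (Complex.I*(t:ℂ)⁻¹)^2) * (((x i : ℝ):ℂ))^2
          + cc d t * Ph t x * (u (-1/t) (t⁻¹ • x) * Complex.I * (t:ℂ)⁻¹) ) := by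
    rw [laplacian]
    refine Finset.sum_congr rfl fun i _ => ?_
    rw [pderiv_pderiv_pc hs t x i]
    push_cast
    ring
  rw [hsum]
  rw [Finset.sum_add_distrib, Finset.sum_add_distrib, Finset.sum_add_distrib,
    ← Finset.mul_sum, ← Finset.mul_sum, ← Finset.mul_sum, Finset.sum_const,
    Finset.card_univ, Fintype.card_fin, nsmul_eq_mul]
  rw [show laplacian d (u (-1/t)) (t⁻¹ • x)
      = ∑ i : Fin d, pderiv d (fun z => pderiv d (u (-1/t)) i z) i (t⁻¹ • x) from rfl]
  have hnorm : ((‖x‖^2 : ℝ):ℂ) = ∑ i : Fin d, (((x i : ℝ):ℂ))^2 := by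
    have : (‖x‖:ℝ)^2 = ∑ i : Fin d, (x i)^2 := by
      rw [EuclideanSpace.norm_eq, Real.sq_sqrt (by positivity)]
      simp [Real.norm_eq_abs, sq_abs]
    rw [this]
    push_cast
    ring
  rw [hnorm]
  ring

end PCAux3

namespace PCAux4
open PCAux Filter

variable {d : ℕ} {u : ℝ → EuclideanSpace ℝ (Fin d) → ℂ}
variable (hs : ContDiff ℝ (⊤ : ℕ∞) fun q : ℝ × EuclideanSpace ℝ (Fin d) => u q.1 q.2)
include hs

lemma fderiv_full_split (s : ℝ) (y : EuclideanSpace ℝ (Fin d)) (a : ℝ)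
    (v : EuclideanSpace ℝ (Fin d)) :
    fderiv ℝ (fun q : ℝ × EuclideanSpace ℝ (Fin d) => u q.1 q.2) (s, y) (a, v)
      = (a : ℂ) * deriv (fun τ => u τ y) s + fderiv ℝ (u s) y v := by
  set F := fun q : ℝ × EuclideanSpace ℝ (Fin d) => u q.1 q.2 with hF
  set L := fderiv ℝ F (s, y) with hL
  have hFd : HasFDerivAt F L (s, y) := (hs.differentiable (by simp) (s, y)).hasFDerivAt
  have h1 : HasDerivAt (fun τ => u τ y) (L (1, 0)) s :=
    hFd.comp_hasDerivAt (f := fun τ : ℝ => (τ, y)) s ((hasDerivAt_id s).prodMk (hasDerivAt_const s y))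
  have h2 : HasFDerivAt (u s)
      (L.comp ((0 : EuclideanSpace ℝ (Fin d) →L[ℝ] ℝ).prod
        (ContinuousLinearMap.id ℝ (EuclideanSpace ℝ (Fin d))))) y :=
    hFd.comp y ((hasFDerivAt_const s y).prodMk (hasFDerivAt_id y))
  have hv : ((a : ℝ), v) = a • ((1:ℝ), (0 : EuclideanSpace ℝ (Fin d))) + ((0:ℝ), v) := by
    apply Prod.ext <;> simp
  rw [hv, map_add, _root_.map_smul, h1.deriv, h2.fderiv]
  simp [Complex.real_smul]

/-- time derivative of the pseudoconformal transform, for `t > 0`. -/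
lemma deriv_pc_time {t : ℝ} (ht : 0 < t) (x : EuclideanSpace ℝ (Fin d)) :
    deriv (fun τ => pseudoconformal d u τ x) t
      = ((-(d:ℝ)/2 * t ^ (-(d:ℝ)/2 - 1) : ℝ) : ℂ) * u (-1/t) (t⁻¹ • x) * Ph t x
        + cc d t * ( ((t:ℂ)^2)⁻¹ * deriv (fun τ => u τ (t⁻¹ • x)) (-1/t)
            - ((t:ℂ)^2)⁻¹ *
              (∑ i : Fin d, ((x i : ℝ):ℂ) * pderiv d (u (-1/t)) i (t⁻¹ • x)) ) * Ph t x
        + cc d t * u (-1/t) (t⁻¹ • x) *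
            (Ph t x * (Complex.I * (‖x‖:ℂ)^2/2 * (-((t:ℂ)^2)⁻¹))) := by
  classical
  -- the amplitude factor
  have hA : HasDerivAt (fun τ : ℝ => ((|τ| ^ (-(d:ℝ)/2) : ℝ) : ℂ))
      (((-(d:ℝ)/2 * t ^ (-(d:ℝ)/2 - 1) : ℝ)) : ℂ) t := by
    have h1 : HasDerivAt (fun τ : ℝ => τ ^ (-(d:ℝ)/2)) (-(d:ℝ)/2 * t ^ (-(d:ℝ)/2 - 1)) t :=
      Real.hasDerivAt_rpow_const (Or.inl ht.ne')
    have heq : (fun τ : ℝ => |τ| ^ (-(d:ℝ)/2)) =ᶠ[nhds t] (fun τ : ℝ => τ ^ (-(d:ℝ)/2)) := by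
      filter_upwards [eventually_gt_nhds ht] with τ hτ
      rw [abs_of_pos hτ]
    exact (h1.congr_of_eventuallyEq heq).ofReal_comp
  -- the u-factor
  have hq : HasDerivAt (fun τ : ℝ => ((-1/τ : ℝ), ((τ⁻¹ • x) : EuclideanSpace ℝ (Fin d))))
      (((t^2)⁻¹ : ℝ), ((-(t^2)⁻¹ : ℝ) • x)) t := by
    have h1 : HasDerivAt (fun τ : ℝ => -1/τ) ((t^2)⁻¹) t := by
      have := (hasDerivAt_inv ht.ne').fun_neg
      simpa [neg_div] using this
    exact h1.prodMk ((hasDerivAt_inv ht.ne').smul_const x)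
  have hFd : HasFDerivAt (fun q : ℝ × EuclideanSpace ℝ (Fin d) => u q.1 q.2)
      (fderiv ℝ (fun q : ℝ × EuclideanSpace ℝ (Fin d) => u q.1 q.2) (-1/t, t⁻¹ • x))
      (-1/t, t⁻¹ • x) := (hs.differentiable (by simp) _).hasFDerivAt
  have hB : HasDerivAt (fun τ : ℝ => u (-1/τ) (τ⁻¹ • x))
      (fderiv ℝ (fun q : ℝ × EuclideanSpace ℝ (Fin d) => u q.1 q.2) (-1/t, t⁻¹ • x)
        (((t^2)⁻¹ : ℝ), ((-(t^2)⁻¹ : ℝ) • x))) t := hFd.comp_hasDerivAt (f := fun τ : ℝ => ((-1/τ : ℝ), ((τ⁻¹ • x) : EuclideanSpace ℝ (Fin d)))) t hq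
  -- the phase factor
  have hc1 : HasDerivAt (fun τ : ℝ => ((τ : ℝ) : ℂ)) 1 t := by
    simpa using (hasDerivAt_id t).ofReal_comp
  have hne : ((t:ℝ):ℂ) ≠ 0 := by exact_mod_cast ht.ne'
  have hc2 : HasDerivAt (fun τ : ℝ => ((τ : ℝ) : ℂ)⁻¹) (-((t:ℂ)^2)⁻¹) t :=
    (hasDerivAt_inv hne).comp_ofReal
  have hc3 := hc2.const_mul (Complex.I * (‖x‖:ℂ)^2/2)
  have hC : HasDerivAt (fun τ : ℝ => Complex.exp (Complex.I * ((‖x‖:ℂ)^2 / (2 * (τ:ℂ)))))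
      (Ph t x * (Complex.I * (‖x‖:ℂ)^2/2 * (-((t:ℂ)^2)⁻¹))) t := by
    have hfun : (fun τ : ℝ => Complex.exp (Complex.I * (‖x‖:ℂ)^2/2 * ((τ:ℝ):ℂ)⁻¹))
        = fun τ : ℝ => Complex.exp (Complex.I * ((‖x‖:ℂ)^2 / (2 * (τ:ℂ)))) := by
      funext τ; congr 1; ring
    have := hc3.cexp
    rw [hfun] at this
    have hval : Complex.exp (Complex.I * (‖x‖:ℂ)^2/2 * ((t:ℝ):ℂ)⁻¹) = Ph t x := by
      rw [Ph]; congr 1; ring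
    rwa [hval] at this
  have hAll := (hA.mul hB).mul hC
  have hpc : HasDerivAt (fun τ : ℝ => pseudoconformal d u τ x)
      ((((-(d:ℝ)/2 * t ^ (-(d:ℝ)/2 - 1) : ℝ) : ℂ) * u (-1/t) (t⁻¹ • x)
          + ((|t| ^ (-(d:ℝ)/2) : ℝ) : ℂ) *
            (fderiv ℝ (fun q : ℝ × EuclideanSpace ℝ (Fin d) => u q.1 q.2) (-1/t, t⁻¹ • x)
              (((t^2)⁻¹ : ℝ), ((-(t^2)⁻¹ : ℝ) • x)))) * Ph t x
        + (((|t| ^ (-(d:ℝ)/2) : ℝ) : ℂ) * u (-1/t) (t⁻¹ • x)) *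
            (Ph t x * (Complex.I * (‖x‖:ℂ)^2/2 * (-((t:ℂ)^2)⁻¹)))) t := hAll
  rw [hpc.deriv]
  -- now rewrite the full fderiv term
  rw [fderiv_full_split hs]
  have hfx : fderiv ℝ (u (-1/t)) (t⁻¹ • x) ((-(t^2)⁻¹ : ℝ) • x)
      = -((t:ℂ)^2)⁻¹ * (∑ i : Fin d, ((x i : ℝ):ℂ) *
          pderiv d (u (-1/t)) i (t⁻¹ • x)) := by
    rw [_root_.map_smul]
    have := clm_eval_basis (fderiv ℝ (u (-1/t)) (t⁻¹ • x)) x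
    rw [this]
    rw [Complex.real_smul]
    push_cast
    rw [Finset.mul_sum, Finset.mul_sum]
    refine Finset.sum_congr rfl fun i _ => ?_
    rw [Complex.real_smul]
    rfl
  rw [hfx]
  rw [show cc d t = ((|t| ^ (-(d:ℝ)/2) : ℝ) : ℂ) from rfl]
  push_cast
  ring

end PCAux4

/-- If `u` smoothly solves the free NLS with exponent `p` on
`I × ℝ^d` with `I ⊂ (-∞,0)`, then its pseudoconformal transform solves
`(i∂ₜ + ½Δ)u_pc = μ t^{(d/2)(p-1)-2} |u_pc|^{p-1} u_pc` on `(-I⁻¹) × ℝ^d ⊂ (0,∞) × ℝ^d`. -/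
theorem pseudoconformal_nls (d : ℕ) (hd : 1 ≤ d) (p : ℝ) (hp : 1 < p) (μ : ℝ)
    (hμ : μ = 1 ∨ μ = -1) (I : Set ℝ) (hI : I ⊆ Set.Iio (0 : ℝ))
    (u : ℝ → EuclideanSpace ℝ (Fin d) → ℂ)
    (hsmooth : ContDiff ℝ (⊤ : ℕ∞) (fun q : ℝ × EuclideanSpace ℝ (Fin d) => u q.1 q.2))
    (hu : ∀ t ∈ I, ∀ x : EuclideanSpace ℝ (Fin d),
      Complex.I * deriv (fun s => u s x) t + (1 / 2) * laplacian d (u t) x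
        = (μ : ℂ) * ((‖u t x‖ ^ (p - 1) : ℝ) : ℂ) * u t x) :
    ∀ t ∈ {s : ℝ | ∃ r ∈ I, s = -1 / r}, ∀ x : EuclideanSpace ℝ (Fin d),
      Complex.I * deriv (fun s => pseudoconformal d u s x) t
          + (1 / 2) * laplacian d (pseudoconformal d u t) x
        = (μ : ℂ) * ((t ^ ((d / 2 : ℝ) * (p - 1) - 2) : ℝ) : ℂ)
            * ((‖pseudoconformal d u t x‖ ^ (p - 1) : ℝ) : ℂ)
            * pseudoconformal d u t x := by
  rintro t ⟨r, hrI, rfl⟩ x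
  have hr : r < 0 := hI hrI
  set T : ℝ := -1 / r with hT
  have ht0 : 0 < T := div_pos_of_neg_of_neg (by norm_num) hr
  have hsr : -1 / T = r := by
    rw [hT]; field_simp
  have hcc : PCAux.cc d T = ((T ^ (-(d:ℝ)/2) : ℝ) : ℂ) := by
    rw [PCAux.cc, abs_of_pos ht0]
  have hrpow1 : T ^ (-(d:ℝ)/2 - 1) = T ^ (-(d:ℝ)/2) * T⁻¹ := by
    rw [Real.rpow_sub ht0, Real.rpow_one, div_eq_mul_inv]
  have key := PCAux4.deriv_pc_time (u := u) hsmooth ht0 x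
  have keyL := PCAux3.laplacian_pc (u := u) hsmooth T x
  have hL : Complex.I * deriv (fun τ => pseudoconformal d u τ x) T
      + (1/2) * laplacian d (pseudoconformal d u T) x
      = PCAux.cc d T * PCAux.Ph T x * ((T:ℂ)^2)⁻¹ *
        (Complex.I * deriv (fun s => u s (T⁻¹ • x)) r
          + (1 / 2) * laplacian d (u r) (T⁻¹ • x)) := by
    rw [key, keyL]
    simp only [hsr]
    rw [hcc, hrpow1]
    push_cast
    ring
  rw [hL, hu r hrI (T⁻¹ • x)]
  -- norm computations
  have hPh : ‖PCAux.Ph T x‖ = 1 := by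
    have hz : Complex.I * ((‖x‖:ℂ)^2 / (2*(T:ℂ)))
        = Complex.I * ((((‖x‖^2/(2*T)) : ℝ)):ℂ) := by push_cast; ring
    have hre : (Complex.I * ((((‖x‖^2/(2*T)) : ℝ)):ℂ)).re = 0 := by
      rw [Complex.mul_re, Complex.I_re, Complex.I_im, Complex.ofReal_re, Complex.ofReal_im]
      ring
    rw [PCAux.Ph, hz, Complex.norm_exp, hre, Real.exp_zero]
  have hpc_val : pseudoconformal d u T x
      = PCAux.cc d T * u r (T⁻¹ • x) * PCAux.Ph T x := by
    rw [show pseudoconformal d u T x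
        = PCAux.cc d T * u (-1/T) (T⁻¹ • x) * PCAux.Ph T x from rfl, hsr]
  have hnpc : ‖pseudoconformal d u T x‖ = T ^ (-(d:ℝ)/2) * ‖u r (T⁻¹ • x)‖ := by
    rw [hpc_val, norm_mul, norm_mul, hPh, mul_one, hcc]
    rw [Complex.norm_real, Real.norm_eq_abs, abs_of_nonneg (Real.rpow_nonneg ht0.le _)]
  rw [hnpc, Real.mul_rpow (Real.rpow_nonneg ht0.le _) (norm_nonneg _),
    ← Real.rpow_mul ht0.le]
  have hTT : T ^ ((d/2:ℝ)*(p-1)-2) * T ^ (-(d:ℝ)/2*(p-1)) = (T^2)⁻¹ := by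
    rw [← Real.rpow_add ht0, show (d/2:ℝ)*(p-1)-2 + -(d:ℝ)/2*(p-1) = -2 by ring]
    rw [show (-2:ℝ) = ((-2 : ℤ):ℝ) by norm_num, Real.rpow_intCast]
    norm_num
  have hTTC : ((T ^ ((d/2:ℝ)*(p-1)-2) : ℝ):ℂ) * ((T ^ (-(d:ℝ)/2*(p-1)) : ℝ):ℂ)
      = ((T:ℂ)^2)⁻¹ := by
    rw [← Complex.ofReal_mul, hTT]
    push_cast
    ring
  rw [hpc_val, Complex.ofReal_mul]
  linear_combination (-1 : ℂ) * ((μ:ℂ) * ((‖u r (T⁻¹ • x)‖ ^ (p-1) : ℝ):ℂ) * (PCAux.cc d T *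
    u r (T⁻¹ • x) * PCAux.Ph T x)) * hTTC
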